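/- Assume that for every e_j ∈ M_2 the Fermat reduction of H_{e_j} := G' · (e_j − α_{i−1}) is the zero polynomial. Then G' factors as G' = ∏_{e_j ∈ M_2} ( ∏_{l ∈ Z_p ∖ {α_{i−1}}} (e_j − l) ) · R, where R ∈ Z_p[e_1, …, e_m] involves none of the variables in M_2; moreover R can be written as a sum, over monomials in the variables e_r with e_r ∉ M_2 ∪ {e_i}, of those monomials multiplied by coefficients that are univariate polynomials in e_i. -/
import Mathlib


open MvPolynomial
open scoped Classical

noncomputable section

/-- Exponent reduction implementing Fermat's relation `x^p ≡ x`: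
`0 ↦ 0` and `k ↦ ((k-1) mod (p-1)) + 1` for `k ≥ 1`. -/
def fermatExp (p k : ℕ) : ℕ := if k = 0 then 0 else (k - 1) % (p - 1) + 1

lemma fermatExp_zero (p : ℕ) : fermatExp p 0 = 0 := by simp [fermatExp]

/-- The Fermat reduction `F'` of a multivariate polynomial over `Z_p`: every exponent is
reduced using `x^p ≡ x`, so that the result has degree `≤ p-1` in each variable. -/
def fermatReduce {σ : Type*} (p : ℕ) (F : MvPolynomial σ (ZMod p)) : MvPolynomial σ (ZMod p) :=
  F.support.sum fun d => monomial (d.mapRange (fermatExp p) (fermatExp_zero p)) (F.coeff d)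

/-- Univariate Fermat reduction. -/
def fermatReduceUni (p : ℕ) (f : Polynomial (ZMod p)) : Polynomial (ZMod p) :=
  f.support.sum fun k => Polynomial.monomial (fermatExp p k) (f.coeff k)

/-- `N_e(v_i)`: the edges incident to the vertex `i`. -/
def incidentE {n m : ℕ} (ed : Fin m → Sym2 (Fin n)) (i : Fin n) : Finset (Fin m) :=
  Finset.univ.filter fun k => i ∈ ed k

/-- `N_i(v_i)`: the neighbours of `v_i` other than `v_1, …, v_{i-1}`. -/
def laterNbrs {n m : ℕ} (ed : Fin m → Sym2 (Fin n)) (i : Fin n) : Finset (Fin n) :=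
  Finset.univ.filter fun j => (∃ k, ed k = s(i, j)) ∧ ¬ j < i

/-- `N_i(e_i)`: the edges sharing an endpoint with `e_i`, other than `e_1, …, e_{i-1}`. -/
def laterAdjE {n m : ℕ} (ed : Fin m → Sym2 (Fin n)) (k : Fin m) : Finset (Fin m) :=
  Finset.univ.filter fun l => (l ≠ k ∧ ∃ x, x ∈ ed k ∧ x ∈ ed l) ∧ ¬ l < k

/-- The polynomial `P` (vertex variables are `Sum.inl`, edge variables are `Sum.inr`). -/
def Ppoly (n m Δ p : ℕ) (ed : Fin m → Sym2 (Fin n)) : MvPolynomial (Fin n ⊕ Fin m) (ZMod p) :=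
  ∏ i : Fin n,
    ((∏ j ∈ laterNbrs ed i, (X (Sum.inl i) - X (Sum.inl j))) *
      (∏ k ∈ incidentE ed i, (X (Sum.inl i) - X (Sum.inr k))) *
      (∏ l ∈ Finset.Icc (Δ + 2) p, (X (Sum.inl i) - C (l : ZMod p))))

/-- The coefficient of the vertex-monomial `∏ v_j ^ (d j)` of `F`, as a polynomial in the
edge variables. -/
def vCoeff {n m p : ℕ} (F : MvPolynomial (Fin n ⊕ Fin m) (ZMod p)) (d : Fin n →₀ ℕ) :
    MvPolynomial (Fin m) (ZMod p) :=
  ((sumAlgEquiv (ZMod p) (Fin n) (Fin m)) F).coeff d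

/-- The colour set `K = {1, …, Δ+1} ∪ {α} ⊆ Z_p`. -/
def colorSet (Δ p : ℕ) (α : ZMod p) : Finset (ZMod p) :=
  insert α ((Finset.Icc 1 (Δ + 1)).image fun l : ℕ => (l : ZMod p))

/-- The polynomial `E^k`. -/
def Epoly {n m : ℕ} (Δ p : ℕ) [NeZero p] (ed : Fin m → Sym2 (Fin n)) (α : ZMod p) (k : Fin m) :
    MvPolynomial (Fin m) (ZMod p) :=
  (∏ l ∈ laterAdjE ed k, (X k - X l)) *
    (∏ c ∈ Finset.univ \ colorSet Δ p α, (X k - C c))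

/-- `Q_i = C^{P'} · E^1 ⋯ E^i`; here `i` is the number of edge factors, so `Qpoly … i`
is the paper's `Q_i` (and `Qpoly … 0 = C^{P'}`). -/
def Qpoly {n m : ℕ} (Δ p : ℕ) [NeZero p] (ed : Fin m → Sym2 (Fin n)) (α : ZMod p)
    (CP : MvPolynomial (Fin m) (ZMod p)) (i : ℕ) : MvPolynomial (Fin m) (ZMod p) :=
  CP * ∏ k ∈ Finset.univ.filter (fun k : Fin m => (k : ℕ) < i), Epoly Δ p ed α k

/-- Fermat reduction in all variables except the variable `j`. -/
def fermatReduceExcept {m : ℕ} (p : ℕ) (j : Fin m) (F : MvPolynomial (Fin m) (ZMod p)) :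
    MvPolynomial (Fin m) (ZMod p) :=
  F.support.sum fun d =>
    monomial (Finsupp.filter (fun k => k = j) d +
      Finsupp.mapRange (fermatExp p) (fermatExp_zero p) (Finsupp.filter (fun k => k ≠ j) d))
      (F.coeff d)

/-- Given an exponent vector `d0` for the variables other than `j`, the coefficient in `F` of the
monomial `∏_{k ≠ j} X_k ^ (d0 k)`, as a univariate polynomial in the variable `j`. -/
def coeffAt {m p : ℕ} (j : Fin m) (d0 : Fin m →₀ ℕ) (F : MvPolynomial (Fin m) (ZMod p)) :
    Polynomial (ZMod p) :=
  (F.support.filter fun d => ∀ k, k ≠ j → d k = d0 k).sum fun d =>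
    Polynomial.monomial (d j) (F.coeff d)



section Aux

variable {p : ℕ}

lemma fermatExp_le (hp : 2 ≤ p) (k : ℕ) : fermatExp p k ≤ p - 1 := by
  unfold fermatExp
  split
  · omega
  · have : (k - 1) % (p - 1) < p - 1 := Nat.mod_lt _ (by omega)
    omega

lemma pow_fermatExp [Fact p.Prime] (x : ZMod p) (k : ℕ) : x ^ fermatExp p k = x ^ k := by
  unfold fermatExp
  split
  · next h => subst h; rfl
  · next h =>
    obtain ⟨k', rfl⟩ : ∃ k', k = k' + 1 := ⟨k - 1, by omega⟩
    by_cases hx : x = 0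
    · subst hx
      rw [zero_pow (by omega), zero_pow (by omega)]
    · have h1 : x ^ (p - 1) = 1 := ZMod.pow_card_sub_one_eq_one hx
      simp only [Nat.add_sub_cancel]
      conv_rhs => rw [← Nat.div_add_mod k' (p - 1)]
      rw [pow_succ, pow_succ, pow_add, pow_mul, h1, one_pow, one_mul]

lemma eval_fermatReduce [Fact p.Prime] {σ : Type*} (F : MvPolynomial σ (ZMod p))
    (x : σ → ZMod p) : eval x (fermatReduce p F) = eval x F := by
  conv_rhs => rw [← F.support_sum_monomial_coeff]
  rw [fermatReduce, map_sum, map_sum]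
  refine Finset.sum_congr rfl fun d _ => ?_
  rw [eval_monomial, eval_monomial]
  congr 1
  rw [Finsupp.prod_mapRange_index (by simp)]
  exact Finsupp.prod_congr fun k _ => pow_fermatExp _ _

lemma coeff_monomial_sum_ne {R σ ι : Type*} [CommSemiring R] {s : Finset ι}
    {g : ι → (σ →₀ ℕ)} {c : ι → R} {d : σ →₀ ℕ}
    (h : coeff d (∑ e ∈ s, monomial (g e) (c e)) ≠ 0) : ∃ e ∈ s, d = g e := by
  by_contra hc
  push_neg at hc
  refine h ?_
  rw [coeff_sum]
  refine Finset.sum_eq_zero fun e he => ?_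
  rw [coeff_monomial, if_neg fun hd => hc e he hd.symm]

lemma support_fermatReduce_le [Fact p.Prime] {σ : Type*} (F : MvPolynomial σ (ZMod p))
    {d : σ →₀ ℕ} (hd : d ∈ (fermatReduce p F).support) (k : σ) : d k ≤ p - 1 := by
  obtain ⟨e, -, rfl⟩ := coeff_monomial_sum_ne (mem_support_iff.mp hd)
  rw [Finsupp.mapRange_apply]
  exact fermatExp_le (Fact.out (p := p.Prime)).two_le _

lemma mv_eq_of_eval_eq [Fact p.Prime] {σ : Type} [Finite σ]
    (F G : MvPolynomial σ (ZMod p))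
    (hF : ∀ d ∈ F.support, ∀ k, d k ≤ p - 1) (hG : ∀ d ∈ G.support, ∀ k, d k ≤ p - 1)
    (h : ∀ x, eval x F = eval x G) : F = G := by
  rw [← sub_eq_zero]
  refine eq_zero_of_eval_eq_zero (σ := σ) (K := ZMod p) _ (fun v => by simp [h v]) ?_
  rw [mem_restrictDegree]
  intro s hs i
  rw [ZMod.card]
  rw [mem_support_iff, coeff_sub] at hs
  rcases ne_or_eq (coeff s F) 0 with h0 | h0
  · exact hF s (mem_support_iff.mpr h0) i
  · refine hG s (mem_support_iff.mpr ?_) i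
    intro h1
    rw [h0, h1, sub_zero] at hs
    exact hs rfl

lemma degreeOf_prod_le' {R σ ι : Type*} [CommSemiring R] (k : σ) (s : Finset ι)
    (f : ι → MvPolynomial σ R) :
    degreeOf k (∏ j ∈ s, f j) ≤ ∑ j ∈ s, degreeOf k (f j) := by
  classical
  induction s using Finset.cons_induction with
  | empty =>
    rw [Finset.prod_empty, Finset.sum_empty, ← C_1]
    exact le_of_eq (degreeOf_C 1 k)
  | cons a s ha ih =>
    rw [Finset.prod_cons, Finset.sum_cons]
    exact (degreeOf_mul_le _ _ _).trans (by omega)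

lemma degreeOf_linear_le' {R σ : Type*} [CommRing R] [Nontrivial R] [DecidableEq σ]
    (k j : σ) (c : R) :
    degreeOf k (X j - C c : MvPolynomial σ R) ≤ if k = j then 1 else 0 := by
  rw [sub_eq_add_neg, ← C_neg]
  refine (degreeOf_add_le _ _ _).trans ?_
  rw [degreeOf_X, degreeOf_C]
  simp

end Aux

/-- Lemma 3.10 of the paper. Under Hypothesis 3.5 (with `α = α_{i-1}`), if for
every `e_j ∈ M_2` the Fermat reduction of `H_{e_j} = G'·(e_j - α_{i-1})` is the zero polynomial,
then `G'` factors as `∏_{e_j ∈ M_2} ∏_{l ≠ α_{i-1}} (e_j - l)` times a polynomial `R` involving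
none of the variables of `M_2`.  (The paper's `e_i` is the edge variable of index `i` here; the
edges `e_1, …, e_{i-1}` are the variables of index `< i`.) -/
theorem statement5 (n m Δ p : ℕ) [Fact p.Prime]
    (hm : 1 ≤ m) (hp : m ^ 2 * (2 * Δ + 2) ≤ p)
    (ed : Fin m → Sym2 (Fin n)) (hinj : Function.Injective ed)
    (hsimple : ∀ k, ¬ (ed k).IsDiag)
    (hΔ : ∀ i, (incidentE ed i).card ≤ Δ)
    (hΔmax : ∃ i, (incidentE ed i).card = Δ)
    (d : Fin n →₀ ℕ) (CP : MvPolynomial (Fin m) (ZMod p))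
    (hCP : CP = vCoeff (fermatReduce p (Ppoly n m Δ p ed)) d) (hCP0 : CP ≠ 0)
    (α : ZMod p) (hα : α ∉ (Finset.range (Δ + 2)).image fun l : ℕ => (l : ZMod p))
    (i : Fin m) (hi : 1 ≤ (i : ℕ))
    (hQprev : fermatReduce p (Qpoly Δ p ed α CP (i : ℕ)) ≠ 0)
    (hQi : fermatReduce p (Qpoly Δ p ed α CP ((i : ℕ) + 1)) = 0)
    (M1 : Finset (Fin m)) (hM1 : ∀ k ∈ M1, k < i)
    (Gp : MvPolynomial (Fin m) (ZMod p))
    (hGp : Gp = Qpoly Δ p ed α CP (i : ℕ) * ∏ k ∈ M1, (X k - C α))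
    (M2 : Finset (Fin m)) (hM2 : M2 = (Finset.univ.filter fun k : Fin m => k < i) \ M1)
    (hG : fermatReduce p Gp ≠ 0)
    (hH : ∀ j ∈ M2, fermatReduce p (fermatReduce p Gp * (X j - C α)) = 0) :
    ∃ R : MvPolynomial (Fin m) (ZMod p),
      fermatReduce p Gp =
        (∏ j ∈ M2, ∏ c ∈ Finset.univ \ ({α} : Finset (ZMod p)), (X j - C c)) * R ∧
      ∀ j ∈ M2, degreeOf j R = 0 := by
  classical
  have hp2 : 2 ≤ p := (Fact.out (p := p.Prime)).two_le
  set G' := fermatReduce p Gp with hG'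
  set c0 : ZMod p := ∏ c ∈ Finset.univ \ ({α} : Finset (ZMod p)), (α - c) with hc0
  have hc0ne : c0 ≠ 0 := by
    rw [hc0]
    refine Finset.prod_ne_zero_iff.mpr fun c hc => ?_
    rw [Finset.mem_sdiff, Finset.mem_singleton] at hc
    exact sub_ne_zero.mpr fun h => hc.2 h.symm
  set Rsub : MvPolynomial (Fin m) (ZMod p) :=
    ∑ d ∈ G'.support, monomial (Finsupp.filter (fun k => k ∉ M2) d)
      (coeff d G' * α ^ (∑ j ∈ M2, d j)) with hRsubdef
  set R : MvPolynomial (Fin m) (ZMod p) := C (c0⁻¹ ^ M2.card) * Rsub with hRdef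
  have hRsupp : ∀ d ∈ R.support, ∃ e ∈ G'.support,
      d = Finsupp.filter (fun k => k ∉ M2) e := by
    intro d hd
    rw [mem_support_iff, hRdef, coeff_C_mul] at hd
    exact coeff_monomial_sum_ne (right_ne_zero_of_mul hd)
  have hRM2 : ∀ j ∈ M2, degreeOf j R = 0 := by
    intro j hj
    rw [degreeOf_eq_sup]
    refine Nat.le_zero.mp (Finset.sup_le fun d hd => ?_)
    obtain ⟨e, -, rfl⟩ := hRsupp d hd
    rw [Finsupp.filter_apply, if_neg (by simp [hj])]
  refine ⟨R, ?_, hRM2⟩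
  have hcard : (Finset.univ \ ({α} : Finset (ZMod p))).card = p - 1 := by
    rw [Finset.card_sdiff_of_subset (Finset.subset_univ _), Finset.card_univ, ZMod.card,
      Finset.card_singleton]
  refine mv_eq_of_eval_eq _ _ (fun d hd k => support_fermatReduce_le _ hd k) ?_ ?_
  · -- degree bound on the RHS
    intro d hd k
    have hle : d k ≤ degreeOf k
        ((∏ j ∈ M2, ∏ c ∈ Finset.univ \ ({α} : Finset (ZMod p)), (X j - C c)) * R) := by
      rw [degreeOf_eq_sup]
      exact Finset.le_sup (f := fun d => d k) hd
    have hmul := degreeOf_mul_le k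
      (∏ j ∈ M2, ∏ c ∈ Finset.univ \ ({α} : Finset (ZMod p)), (X j - C c)) R
    have hprod : degreeOf k (∏ j ∈ M2, ∏ c ∈ Finset.univ \ ({α} : Finset (ZMod p)),
        (X j - C c) : MvPolynomial (Fin m) (ZMod p)) ≤ if k ∈ M2 then p - 1 else 0 := by
      refine (degreeOf_prod_le' _ _ _).trans ?_
      have h1 : ∀ j ∈ M2, degreeOf k (∏ c ∈ Finset.univ \ ({α} : Finset (ZMod p)),
          (X j - C c) : MvPolynomial (Fin m) (ZMod p)) ≤ if k = j then p - 1 else 0 := by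
        intro j hj
        refine (degreeOf_prod_le' _ _ _).trans ?_
        calc ∑ c ∈ Finset.univ \ ({α} : Finset (ZMod p)),
              degreeOf k (X j - C c : MvPolynomial (Fin m) (ZMod p))
            ≤ ∑ _c ∈ Finset.univ \ ({α} : Finset (ZMod p)), (if k = j then 1 else 0) :=
              Finset.sum_le_sum fun c _ => degreeOf_linear_le' k j c
          _ = if k = j then p - 1 else 0 := by
              rw [Finset.sum_const, hcard]
              split <;> simp
      calc ∑ j ∈ M2, degreeOf k (∏ c ∈ Finset.univ \ ({α} : Finset (ZMod p)),
              (X j - C c) : MvPolynomial (Fin m) (ZMod p))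
          ≤ ∑ j ∈ M2, (if k = j then p - 1 else 0) := Finset.sum_le_sum h1
        _ = if k ∈ M2 then p - 1 else 0 := by rw [Finset.sum_ite_eq M2 k fun _ => p - 1]
    have hRdeg : degreeOf k R ≤ if k ∈ M2 then 0 else p - 1 := by
      by_cases hk : k ∈ M2
      · rw [if_pos hk]
        exact le_of_eq (hRM2 k hk)
      · rw [if_neg hk, degreeOf_eq_sup]
        refine Finset.sup_le fun d' hd' => ?_
        obtain ⟨e, he, rfl⟩ := hRsupp d' hd'
        have := support_fermatReduce_le _ he k
        rw [Finsupp.filter_apply]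
        split <;> omega
    by_cases hk : k ∈ M2 <;> simp only [hk, if_true, if_false] at hprod hRdeg <;> omega
  · -- evaluations agree
    intro x
    by_cases hx : ∀ j ∈ M2, x j = α
    · have h1 : eval x (∏ j ∈ M2, ∏ c ∈ Finset.univ \ ({α} : Finset (ZMod p)),
          (X j - C c) : MvPolynomial (Fin m) (ZMod p)) = c0 ^ M2.card := by
        rw [map_prod, ← Finset.prod_const]
        refine Finset.prod_congr rfl fun j hj => ?_
        rw [map_prod, hc0]
        refine Finset.prod_congr rfl fun c _ => ?_
        rw [map_sub, eval_X, eval_C, hx j hj]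
      have h2 : eval x Rsub = eval x G' := by
        rw [hRsubdef, map_sum]
        conv_rhs => rw [← G'.support_sum_monomial_coeff, map_sum]
        refine Finset.sum_congr rfl fun d _ => ?_
        rw [eval_monomial, eval_monomial,
          Finsupp.prod_fintype _ _ (fun i => pow_zero (x i)),
          Finsupp.prod_fintype _ _ (fun i => pow_zero (x i)), mul_assoc]
        congr 1
        have hsplit : ∀ g : Fin m → ZMod p, ∏ k : Fin m, g k =
            (∏ k ∈ Finset.univ.filter (· ∈ M2), g k) *
            ∏ k ∈ Finset.univ.filter (· ∉ M2), g k :=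
          fun g => (Finset.prod_filter_mul_prod_filter_not _ _ _).symm
        rw [hsplit fun k => x k ^ d k, hsplit fun k => x k ^ (Finsupp.filter (· ∉ M2) d) k]
        have e1 : ∏ k ∈ Finset.univ.filter (· ∈ M2),
            x k ^ (Finsupp.filter (· ∉ M2) d) k = 1 := by
          refine Finset.prod_eq_one fun k hk => ?_
          rw [Finset.mem_filter] at hk
          rw [Finsupp.filter_apply, if_neg (by simp [hk.2]), pow_zero]
        have e2 : ∏ k ∈ Finset.univ.filter (· ∉ M2),
            x k ^ (Finsupp.filter (· ∉ M2) d) k =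
            ∏ k ∈ Finset.univ.filter (· ∉ M2), x k ^ d k := by
          refine Finset.prod_congr rfl fun k hk => ?_
          rw [Finset.mem_filter] at hk
          rw [Finsupp.filter_apply, if_pos hk.2]
        have e3 : ∏ k ∈ Finset.univ.filter (· ∈ M2), x k ^ d k =
            α ^ ∑ j ∈ M2, d j := by
          rw [← Finset.prod_pow_eq_pow_sum]
          rw [show Finset.univ.filter (· ∈ M2) = M2 by
            ext a; simp]
          exact Finset.prod_congr rfl fun k hk => by rw [hx k hk]
        rw [e1, e2, e3, one_mul]
      rw [map_mul, h1, hRdef, map_mul, eval_C, h2, ← mul_assoc, ← mul_pow,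
        mul_inv_cancel₀ hc0ne, one_pow, one_mul]
    · push_neg at hx
      obtain ⟨j, hjM, hja⟩ := hx
      have h0 : eval x G' = 0 := by
        have h2 := congrArg (eval x) (hH j hjM)
        rw [eval_fermatReduce, map_mul, map_sub, eval_X, eval_C, map_zero] at h2
        rcases mul_eq_zero.mp h2 with h | h
        · exact h
        · exact absurd (sub_eq_zero.mp h) hja
      rw [h0, map_mul, map_prod]
      rw [Finset.prod_eq_zero hjM (by
        rw [map_prod]
        refine Finset.prod_eq_zero (i := x j) (by simp [hja]) ?_
        rw [map_sub, eval_X, eval_C, sub_self]), zero_mul]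

end
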